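/- Let Q be an n×n symmetric positive definite matrix, c ∈ ℝ^n, f(x) := (1/2)⟨x, Qx⟩ + ⟨c, x⟩, T : ℝ^n → ℝ^m linear, b ∈ ℝ^m, and K ⊆ ℝ^m a regular closed convex cone (ℝ^n and ℝ^m with the Euclidean inner product). Suppose there exist ê ∈ ℝ^n with e := T ê ∈ int K and ε > 0 with T ê + ε b ∈ K (so that ê/ε is feasible for the primal min{f(x) : Tx + b ∈ K}). Then every optimal solution y_opt of the dual problem min{f*(T*y) + ⟨b, y⟩ : y ∈ K*} satisfies ⟨e, y_opt⟩ ≤ ‖ê‖ · sqrt((2 f(ê/ε) + ⟨c, Q^{-1} c⟩) / λ_min(Q^{-1})), where λ_min(Q^{-1}) > 0 is the minimum eigenvalue of Q^{-1}. -/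

import Mathlib

open scoped RealInnerProductSpace

/-!
Write `s = T* y_opt` and `A = Q⁻¹`. Along the ray `t • y_opt` of the dual cone the dual objective
is the quadratic `½ ⟪s, A s⟫ t² + (⟪b, y_opt⟫ - ⟪c, A s⟫) t + ½ ⟪c, A c⟫`, minimised over `t > 0`
at `t = 1`; stationarity gives `⟪s, A s⟫ + ⟪b, y_opt⟫ = ⟪c, A s⟫`. Pairing `y_opt ∈ K*` with
`T ê + ε b ∈ K` gives `-⟪b, y_opt⟫ ≤ ⟪u, s⟫ = ⟪Q u, A s⟫` for `u = ê / ε`, so with `w = c + Q u`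
we get `⟪s, A s⟫ ≤ ⟪w, A s⟫`, which positivity of `A` upgrades to
`⟪s, A s⟫ ≤ ⟪w, A w⟫ = 2 f(u) + ⟪c, A c⟫`. Finally `λ ‖s‖² ≤ ⟪s, A s⟫` and
`⟪e, y_opt⟫ = ⟪ê, s⟫ ≤ ‖ê‖ ‖s‖`.
-/

/-- The Fenchel conjugate `f*(s) = sup_x (⟨s,x⟩ - f(x))`. -/
noncomputable def fenchelConj {n : ℕ} (f : EuclideanSpace ℝ (Fin n) → ℝ)
    (s : EuclideanSpace ℝ (Fin n)) : ℝ :=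
  ⨆ x, (⟪s, x⟫ - f x)

/-- The dual objective `h(y) = f*(T*y) + ⟨b,y⟩`. -/
noncomputable def dualObj {n m : ℕ} (f : EuclideanSpace ℝ (Fin n) → ℝ)
    (T : EuclideanSpace ℝ (Fin n) →L[ℝ] EuclideanSpace ℝ (Fin m))
    (b y : EuclideanSpace ℝ (Fin m)) : ℝ :=
  fenchelConj f (ContinuousLinearMap.adjoint T y) + ⟪b, y⟫

/-- The quadratic objective `f(x) = (1/2)⟨x, Qx⟩ + ⟨c, x⟩`. -/
noncomputable def quadObj {n : ℕ} (Q : Matrix (Fin n) (Fin n) ℝ)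
    (c x : EuclideanSpace ℝ (Fin n)) : ℝ :=
  1 / 2 * ⟪x, Matrix.toEuclideanLin Q x⟫ + ⟪c, x⟫

section InnerProductSpace

variable {E : Type*} [NormedAddCommGroup E] [InnerProductSpace ℝ E]

theorem LinearMap.IsSymmetric.inner_map_comm {A : E →ₗ[ℝ] E} (hA : A.IsSymmetric) (x y : E) :
    ⟪x, A y⟫ = ⟪y, A x⟫ := by
  rw [← hA, real_inner_comm]

theorem LinearMap.IsSymmetric.inner_add_map_add {A : E →ₗ[ℝ] E} (hA : A.IsSymmetric)
    (x y : E) : ⟪x + y, A (x + y)⟫ = ⟪x, A x⟫ + 2 * ⟪x, A y⟫ + ⟪y, A y⟫ := by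
  simp only [map_add, inner_add_left, inner_add_right, hA.inner_map_comm y x]
  ring

theorem LinearMap.IsPositive.inner_map_self_le_of_le_inner {A : E →ₗ[ℝ] E} (hA : A.IsPositive)
    {s w : E} (h : ⟪s, A s⟫ ≤ ⟪w, A s⟫) : ⟪s, A s⟫ ≤ ⟪w, A w⟫ := by
  have h0 := hA.inner_nonneg_right (w + -s)
  rw [hA.isSymmetric.inner_add_map_add] at h0
  simp only [map_neg, inner_neg_left, inner_neg_right, neg_neg] at h0
  linarith

theorem exists_pos_mul_norm_sq_le_inner_map [FiniteDimensional ℝ E] {A : E →ₗ[ℝ] E}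
    (hA : ∀ v ≠ 0, 0 < ⟪v, A v⟫) : ∃ r > 0, ∀ v, r * ‖v‖ ^ 2 ≤ ⟪v, A v⟫ := by
  rcases subsingleton_or_nontrivial E with hE | hE
  · exact ⟨1, one_pos, fun v => by simp [Subsingleton.elim v 0]⟩
  obtain ⟨v₀, hv₀, hmin⟩ := (isCompact_sphere (0 : E) 1).exists_isMinOn
    (NormedSpace.sphere_nonempty.2 zero_le_one)
    (continuous_id.inner (𝕜 := ℝ) A.continuous_of_finiteDimensional).continuousOn
  refine ⟨⟪v₀, A v₀⟫, hA v₀ (ne_zero_of_mem_unit_sphere ⟨v₀, hv₀⟩), fun v => ?_⟩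
  rcases eq_or_ne v 0 with rfl | hv
  · simp
  have hnv : 0 < ‖v‖ := norm_pos_iff.2 hv
  have hunit : ‖v‖⁻¹ • v ∈ Metric.sphere (0 : E) 1 := by
    simp [norm_smul, hnv.ne']
  have hle : ⟪v₀, A v₀⟫ ≤ ⟪‖v‖⁻¹ • v, A (‖v‖⁻¹ • v)⟫ := hmin hunit
  rw [map_smul, real_inner_smul_left, real_inner_smul_right] at hle
  calc ⟪v₀, A v₀⟫ * ‖v‖ ^ 2 ≤ ‖v‖⁻¹ * (‖v‖⁻¹ * ⟪v, A v⟫) * ‖v‖ ^ 2 := by gcongr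
    _ = ⟪v, A v⟫ := by field_simp

end InnerProductSpace

theorem two_mul_add_eq_zero_of_isMinOn_Ioi {a β : ℝ}
    (h : IsMinOn (fun t : ℝ => a * t ^ 2 + β * t) (Set.Ioi 0) 1) : 2 * a + β = 0 :=
  (h.isLocalMin (Ioi_mem_nhds one_pos)).hasDerivAt_eq_zero <|
    (((hasDerivAt_pow 2 1).const_mul a).add ((hasDerivAt_id' 1).const_mul β)).congr_deriv
      (by norm_num; ring)

theorem neg_inner_le_inner_adjoint_of_add_smul_mem {E F : Type*} [NormedAddCommGroup E]
    [InnerProductSpace ℝ E] [CompleteSpace E] [NormedAddCommGroup F] [InnerProductSpace ℝ F]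
    [CompleteSpace F] {T : E →L[ℝ] F} {K : Set F} {y b : F} (hy : ∀ x ∈ K, 0 ≤ ⟪x, y⟫)
    {e : E} {ε : ℝ} (hε : 0 < ε) (he : T e + ε • b ∈ K) :
    -⟪b, y⟫ ≤ ⟪ε⁻¹ • e, ContinuousLinearMap.adjoint T y⟫ := by
  have h := hy _ he
  rw [inner_add_left, real_inner_smul_left] at h
  rw [real_inner_smul_left, ContinuousLinearMap.adjoint_inner_right, le_inv_mul_iff₀ hε]
  linarith

namespace Matrix

variable {ι : Type*} [Fintype ι] [DecidableEq ι] {M : Matrix ι ι ℝ}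

theorem PosDef.inner_toEuclideanLin_pos (hM : M.PosDef) {x : EuclideanSpace ℝ ι}
    (hx : x ≠ 0) : 0 < ⟪x, M.toEuclideanLin x⟫ := by
  rw [toLpLin_apply, EuclideanSpace.inner_eq_star_dotProduct]
  simpa [dotProduct_comm] using
    hM.dotProduct_mulVec_pos (x := WithLp.equiv _ _ x) (by simpa using hx)

theorem toEuclideanLin_nonsing_inv_apply (hM : IsUnit M) (x : EuclideanSpace ℝ ι) :
    M⁻¹.toEuclideanLin (M.toEuclideanLin x) = x := by
  simp [toLpLin_apply, mulVec_mulVec, nonsing_inv_mul M ((isUnit_iff_isUnit_det M).1 hM)]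

theorem toEuclideanLin_apply_nonsing_inv (hM : IsUnit M) (x : EuclideanSpace ℝ ι) :
    M.toEuclideanLin (M⁻¹.toEuclideanLin x) = x := by
  simp [toLpLin_apply, mulVec_mulVec, mul_nonsing_inv M ((isUnit_iff_isUnit_det M).1 hM)]

theorem PosDef.inner_toEuclideanLin_nonsing_inv (hM : M.PosDef) (x y : EuclideanSpace ℝ ι) :
    ⟪M.toEuclideanLin x, M⁻¹.toEuclideanLin y⟫ = ⟪x, y⟫ := by
  rw [isSymmetric_toEuclideanLin_iff.2 hM.1, toEuclideanLin_apply_nonsing_inv hM.isUnit]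

end Matrix

section QuadraticProgram

variable {n m : ℕ} {Q : Matrix (Fin n) (Fin n) ℝ} (c : EuclideanSpace ℝ (Fin n))

local notation "A" => Matrix.toEuclideanLin Q⁻¹
local notation "B" => Matrix.toEuclideanLin Q
local postfix:max "†" => ContinuousLinearMap.adjoint

theorem inner_sub_quadObj_eq (hQ : Q.PosDef) (s x : EuclideanSpace ℝ (Fin n)) :
    ⟪s, x⟫ - quadObj Q c x
      = 1 / 2 * ⟪s - c, A (s - c)⟫ - 1 / 2 * ⟪x - A (s - c), B (x - A (s - c))⟫ := by
  rw [sub_eq_add_neg x, (Matrix.isSymmetric_toEuclideanLin_iff.2 hQ.1).inner_add_map_add,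
    map_neg, Matrix.toEuclideanLin_apply_nonsing_inv hQ.isUnit, quadObj]
  have hlin : ⟪s, x⟫ - ⟪c, x⟫ = ⟪x, s - c⟫ := by rw [← inner_sub_left, real_inner_comm]
  simp only [inner_neg_left, inner_neg_right, neg_neg, real_inner_comm (A (s - c)) (s - c)]
  linarith

theorem fenchelConj_quadObj (hQ : Q.PosDef) (s : EuclideanSpace ℝ (Fin n)) :
    fenchelConj (quadObj Q c) s = 1 / 2 * ⟪s - c, A (s - c)⟫ := by
  have hle : ∀ x, ⟪s, x⟫ - quadObj Q c x ≤ 1 / 2 * ⟪s - c, A (s - c)⟫ := fun x => by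
    rw [inner_sub_quadObj_eq c hQ]
    have := (Matrix.isPositive_toEuclideanLin_iff.2 hQ.posSemidef).inner_nonneg_right
      (x - A (s - c))
    linarith
  refine le_antisymm (ciSup_le hle) (le_ciSup_of_le ⟨_, Set.forall_mem_range.2 hle⟩ (A (s - c)) ?_)
  simp [inner_sub_quadObj_eq c hQ]

theorem inner_add_toEuclideanLin_eq_quadObj (hQ : Q.PosDef) (u : EuclideanSpace ℝ (Fin n)) :
    ⟪c + B u, A (c + B u)⟫ = 2 * quadObj Q c u + ⟪c, A c⟫ := by
  rw [(Matrix.isSymmetric_toEuclideanLin_iff.2 hQ.inv.1).inner_add_map_add, quadObj,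
    Matrix.toEuclideanLin_nonsing_inv_apply hQ.isUnit, real_inner_comm (B u)]
  ring

variable (b : EuclideanSpace ℝ (Fin m))
  (T : EuclideanSpace ℝ (Fin n) →L[ℝ] EuclideanSpace ℝ (Fin m))

theorem dualObj_quadObj_smul (hQ : Q.PosDef) (y : EuclideanSpace ℝ (Fin m)) (t : ℝ) :
    dualObj (quadObj Q c) T b (t • y)
      = 1 / 2 * ⟪T† y, A (T† y)⟫ * t ^ 2 + (⟪b, y⟫ - ⟪c, A (T† y)⟫) * t + 1 / 2 * ⟪c, A c⟫ := by
  have hA := Matrix.isSymmetric_toEuclideanLin_iff.2 hQ.inv.1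
  rw [dualObj, fenchelConj_quadObj c hQ, map_smul, sub_eq_add_neg, hA.inner_add_map_add]
  simp only [map_neg, map_smul, inner_neg_right, neg_neg, real_inner_smul_left,
    real_inner_smul_right, hA.inner_map_comm _ c]
  ring

theorem inner_adjoint_add_inner_eq_of_forall_le_smul (hQ : Q.PosDef) {y : EuclideanSpace ℝ (Fin m)}
    (hmin : ∀ t : ℝ, 0 < t → dualObj (quadObj Q c) T b y ≤ dualObj (quadObj Q c) T b (t • y)) :
    ⟪T† y, A (T† y)⟫ + ⟪b, y⟫ = ⟪c, A (T† y)⟫ := by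
  have hray : IsMinOn (fun t : ℝ => 1 / 2 * ⟪T† y, A (T† y)⟫ * t ^ 2
      + (⟪b, y⟫ - ⟪c, A (T† y)⟫) * t) (Set.Ioi 0) 1 := isMinOn_iff.2 fun t ht => by
    have h := hmin t ht
    rw [← one_smul ℝ y, dualObj_quadObj_smul c b T hQ, dualObj_quadObj_smul c b T hQ, one_smul] at h
    linarith
  linarith [two_mul_add_eq_zero_of_isMinOn_Ioi hray]

end QuadraticProgram

theorem stmt_19_general {n m : ℕ}
    (Q : Matrix (Fin n) (Fin n) ℝ) (hQpd : Q.PosDef)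
    (c : EuclideanSpace ℝ (Fin n))
    (T : EuclideanSpace ℝ (Fin n) →L[ℝ] EuclideanSpace ℝ (Fin m))
    (b : EuclideanSpace ℝ (Fin m)) (K : Set (EuclideanSpace ℝ (Fin m)))
    (ehat : EuclideanSpace ℝ (Fin n))
    (ε : ℝ) (hε : 0 < ε) (hfeas : T ehat + ε • b ∈ K)
    (lam : ℝ)
    (hlam : IsGreatest {r : ℝ | ∀ v : EuclideanSpace ℝ (Fin n),
      r * ‖v‖ ^ 2 ≤ ⟪v, Matrix.toEuclideanLin Q⁻¹ v⟫} lam)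
    (yopt : EuclideanSpace ℝ (Fin m))
    (hyoptK : ∀ x ∈ K, 0 ≤ ⟪x, yopt⟫)
    (hyoptmin : ∀ y : EuclideanSpace ℝ (Fin m), (∀ x ∈ K, 0 ≤ ⟪x, y⟫) →
      dualObj (quadObj Q c) T b yopt ≤ dualObj (quadObj Q c) T b y) :
    ⟪T ehat, yopt⟫ ≤ ‖ehat‖ * Real.sqrt
      ((2 * quadObj Q c (ε⁻¹ • ehat) + ⟪c, Matrix.toEuclideanLin Q⁻¹ c⟫) / lam) := by
  set s := ContinuousLinearMap.adjoint T yopt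
  set u := ε⁻¹ • ehat
  set A := Matrix.toEuclideanLin Q⁻¹
  have hstat : ⟪s, A s⟫ + ⟪b, yopt⟫ = ⟪c, A s⟫ :=
    inner_adjoint_add_inner_eq_of_forall_le_smul c b T hQpd fun t ht => hyoptmin _ fun x hx => by
      rw [real_inner_smul_right]
      exact mul_nonneg ht.le (hyoptK x hx)
  have hprimal : -⟪b, yopt⟫ ≤ ⟪Matrix.toEuclideanLin Q u, A s⟫ := by
    rw [hQpd.inner_toEuclideanLin_nonsing_inv]
    exact neg_inner_le_inner_adjoint_of_add_smul_mem hyoptK hε hfeas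
  have hquad : ⟪s, A s⟫ ≤ 2 * quadObj Q c u + ⟪c, A c⟫ := by
    rw [← inner_add_toEuclideanLin_eq_quadObj c hQpd]
    have hA : A.IsPositive := Matrix.isPositive_toEuclideanLin_iff.2 hQpd.inv.posSemidef
    refine hA.inner_map_self_le_of_le_inner ?_
    rw [inner_add_left]
    linarith
  obtain ⟨r, hr, hr_mem⟩ := exists_pos_mul_norm_sq_le_inner_map fun _ hv =>
    hQpd.inv.inner_toEuclideanLin_pos hv
  have hlam_pos : 0 < lam := hr.trans_le (hlam.2 hr_mem)
  have hs : ‖s‖ ≤ Real.sqrt ((2 * quadObj Q c u + ⟪c, A c⟫) / lam) := by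
    refine Real.le_sqrt_of_sq_le ?_
    rw [le_div_iff₀ hlam_pos]
    linarith [hlam.1 s]
  calc ⟪T ehat, yopt⟫ = ⟪ehat, s⟫ := (ContinuousLinearMap.adjoint_inner_right T ehat yopt).symm
    _ ≤ ‖ehat‖ * ‖s‖ := real_inner_le_norm _ _
    _ ≤ _ := by gcongr

/-- For a positive definite quadratic objective
`f(x) = (1/2)⟨x,Qx⟩ + ⟨c,x⟩` over `{x : Tx + b ∈ K}` with `K` regular, if
`ê` satisfies `e := T ê ∈ int K` and `T ê + ε b ∈ K` for some `ε > 0` (so `ê/ε` is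
primal feasible), then every dual optimal solution `y_opt` satisfies
`⟨e, y_opt⟩ ≤ ‖ê‖ sqrt((2 f(ê/ε) + ⟨c, Q⁻¹ c⟩) / λ_min(Q⁻¹))`. -/
theorem stmt_19 {n m : ℕ}
    (Q : Matrix (Fin n) (Fin n) ℝ) (hQsymm : Q.IsSymm) (hQpd : Q.PosDef)
    (c : EuclideanSpace ℝ (Fin n))
    (T : EuclideanSpace ℝ (Fin n) →L[ℝ] EuclideanSpace ℝ (Fin m))
    (b : EuclideanSpace ℝ (Fin m)) (K : Set (EuclideanSpace ℝ (Fin m)))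
    (hclosed : IsClosed K) (hconv : Convex ℝ K)
    (hcone : ∀ (γ : ℝ), 0 ≤ γ → ∀ x ∈ K, γ • x ∈ K)
    (hpointed : K ∩ (-K) = {0}) (hfull : (interior K).Nonempty)
    (ehat : EuclideanSpace ℝ (Fin n))
    (he : T ehat ∈ interior K)
    (ε : ℝ) (hε : 0 < ε) (hfeas : T ehat + ε • b ∈ K)
    (lam : ℝ)
    (hlam : IsGreatest {r : ℝ | ∀ v : EuclideanSpace ℝ (Fin n),
      r * ‖v‖ ^ 2 ≤ ⟪v, Matrix.toEuclideanLin Q⁻¹ v⟫} lam)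
    (yopt : EuclideanSpace ℝ (Fin m))
    (hyoptK : ∀ x ∈ K, 0 ≤ ⟪x, yopt⟫)
    (hyoptmin : ∀ y : EuclideanSpace ℝ (Fin m), (∀ x ∈ K, 0 ≤ ⟪x, y⟫) →
      dualObj (quadObj Q c) T b yopt ≤ dualObj (quadObj Q c) T b y) :
    ⟪T ehat, yopt⟫ ≤ ‖ehat‖ * Real.sqrt
      ((2 * quadObj Q c (ε⁻¹ • ehat) + ⟪c, Matrix.toEuclideanLin Q⁻¹ c⟫) / lam) :=
  stmt_19_general Q hQpd c T b K ehat ε hε hfeas lam hlam yopt hyoptK hyoptmin
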